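/- arXiv:1907.09746 — 2 statements merged into one kernel-verified Lean document; each statement's English description precedes it below -/
import Mathlib

section
/- For every b ∈ ℂ with Re(b) > 0 and every ξ ∈ ℝ with ξ ≥ 0, the series (2/(b+1)) Σ_{n=0}^∞ ((b−1)/(b+1))^n φ_n(ξ) converges to e^{−bξ}, and this expansion also converges to the function ξ ↦ e^{−bξ} in L²((0,∞)). -/
open MeasureTheory Set
open scoped ENNReal

/-- The Laguerre polynomial `L_n(x) = ∑_{k=0}^n C(n, n-k) (-x)^k / k!`. -/
noncomputable def lagL (n : ℕ) (x : ℝ) : ℝ :=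
  ∑ k ∈ Finset.range (n + 1), (n.choose (n - k) : ℝ) * (-x) ^ k / (Nat.factorial k : ℝ)

/-- The Laguerre function `φ_n(x) = e^{-x} L_n(2x)`. -/
noncomputable def lagPhi (n : ℕ) (x : ℝ) : ℝ := Real.exp (-x) * lagL n (2 * x)

/-!
The pointwise expansion is the Laguerre generating function
`∑ tⁿ Lₙ(x) = (1 - t)⁻¹ exp (-x t / (1 - t))` for `‖t‖ < 1`, evaluated at `t = (b - 1) / (b + 1)`
and `x = 2ξ`. It comes from the absolutely convergent double series `∑ C(n, k) tⁿ (-x)ᵏ / k!`,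
summed over `n` first (a negative binomial series) and then over `k` (an exponential series).

In `L²((0, ∞))` every `φₙ` has norm `1 / √2`: after the substitution `y = 2x` this is
`∫ e^{-y} Lₙ(y)² dy = 1`, which follows from the moments `∫ e^{-y} Lₙ(y) yᵐ dy = (-1)ⁿ m! C(m, n)`,
a forward-difference identity for binomial coefficients. As `‖(b - 1) / (b + 1)‖ < 1`, the series
converges absolutely in `L²`, and by Fatou's lemma its `L²` limit is the pointwise limit `e^{-bξ}`.
-/

open Real Filter Topology

theorem Int.alternating_sum_range_choose_mul_choose (n i : ℕ) :
    ∑ k ∈ Finset.range (n + 1), (-1 : ℤ) ^ (n - k) * n.choose k * k.choose i =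
      if n = i then 1 else 0 := by
  simpa [fwdDiff_iter_eq_sum_shift] using fwdDiff_iter_choose_zero i n

theorem Nat.add_choose_eq_sum_choose_mul_choose (k m : ℕ) :
    (k + m).choose k = ∑ i ∈ Finset.range (m + 1), k.choose i * m.choose i := by
  rw [Nat.choose_symm_add, Nat.add_choose_eq, Finset.Nat.sum_antidiagonal_eq_sum_range_succ
    (fun i j => k.choose i * m.choose j)]
  refine Finset.sum_congr rfl fun i hi => ?_
  rw [Nat.choose_symm (Nat.lt_succ_iff.mp (Finset.mem_range.mp hi))]

theorem Int.alternating_sum_range_choose_mul_add_choose (n m : ℕ) :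
    ∑ k ∈ Finset.range (n + 1), (-1 : ℤ) ^ (n - k) * n.choose k * (k + m).choose k =
      m.choose n := by
  simp_rw [Nat.add_choose_eq_sum_choose_mul_choose, Nat.cast_sum, Nat.cast_mul, Finset.mul_sum]
  rw [Finset.sum_comm]
  simp_rw [← mul_assoc, ← Finset.sum_mul, Int.alternating_sum_range_choose_mul_choose, ite_mul,
    one_mul, zero_mul, Finset.sum_ite_eq, Finset.mem_range]
  split_ifs with h
  · rfl
  · rw [Nat.choose_eq_zero_of_lt (by omega), Nat.cast_zero]

section TendstoInLp

variable {α E : Type*} [MeasurableSpace α] {μ : Measure α} [NormedAddCommGroup E] {p : ℝ≥0∞}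
  {f : ℕ → α → E} {g : α → E}

theorem eLpNorm_le_tsum_eLpNorm_of_hasSum (hp : 1 ≤ p) (hf : ∀ n, AEStronglyMeasurable (f n) μ)
    (hg : ∀ᵐ x ∂μ, HasSum (fun n => f n x) (g x)) :
    eLpNorm g p μ ≤ ∑' n, eLpNorm (f n) p μ := by
  refine Lp.eLpNorm_le_of_ae_tendsto (u := atTop) (f := fun N => ∑ n ∈ Finset.range N, f n)
    (Eventually.of_forall fun N => ?_) (fun N => Finset.aestronglyMeasurable_sum _ fun n _ => hf n)
    ?_
  · exact (eLpNorm_sum_le (fun n _ => hf n) hp).trans (ENNReal.sum_le_tsum _)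
  · filter_upwards [hg] with x hx
    simpa [Finset.sum_apply] using hx.tendsto_sum_nat

theorem tendsto_eLpNorm_sub_sum_range_of_hasSum (hp : 1 ≤ p)
    (hf : ∀ n, AEStronglyMeasurable (f n) μ) (hg : ∀ᵐ x ∂μ, HasSum (fun n => f n x) (g x))
    (hfin : ∑' n, eLpNorm (f n) p μ ≠ ∞) :
    Tendsto (fun N => eLpNorm (g - ∑ n ∈ Finset.range N, f n) p μ) atTop (𝓝 0) := by
  refine tendsto_of_tendsto_of_tendsto_of_le_of_le tendsto_const_nhds
    (ENNReal.tendsto_sum_nat_add _ hfin) (fun _ => zero_le) fun N => ?_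
  refine eLpNorm_le_tsum_eLpNorm_of_hasSum hp (fun n => hf (n + N)) ?_
  filter_upwards [hg] with x hx
  simpa [Finset.sum_apply] using (hasSum_nat_add_iff' N).mpr hx

end TendstoInLp

theorem hasSum_choose_mul_pow {𝕜 : Type*} [NormedField 𝕜] [CompleteSpace 𝕜] (k : ℕ) {t : 𝕜}
    (ht : ‖t‖ < 1) : HasSum (fun n => (n.choose k : 𝕜) * t ^ n) (t ^ k / (1 - t) ^ (k + 1)) := by
  rw [← hasSum_nat_add_iff' k]
  have hzero : ∑ i ∈ Finset.range k, (i.choose k : 𝕜) * t ^ i = 0 :=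
    Finset.sum_eq_zero fun i hi => by
      rw [Nat.choose_eq_zero_of_lt (Finset.mem_range.mp hi), Nat.cast_zero, zero_mul]
  rw [hzero, sub_zero]
  have hshift : ∀ n : ℕ, t ^ k * ((n + k).choose k * t ^ n) = (n + k).choose k * t ^ (n + k) :=
    fun n => by ring
  simpa only [hshift, mul_one_div] using
    (hasSum_choose_mul_geometric_of_norm_lt_one k ht).mul_left (t ^ k)

theorem hasSum_choose_mul_pow_mul_pow_div_factorial_fst {𝕜 : Type*} [NormedField 𝕜]
    [CompleteSpace 𝕜] (k : ℕ) {t : 𝕜} (ht : ‖t‖ < 1) (z : 𝕜) :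
    HasSum (fun n => (n.choose k : 𝕜) * t ^ n * (z ^ k / k.factorial))
      ((1 - t)⁻¹ * ((z * t / (1 - t)) ^ k / k.factorial)) := by
  have ht1 : 1 - t ≠ 0 := fun h => by simp [← sub_eq_zero.mp h] at ht
  have hvalue : t ^ k / (1 - t) ^ (k + 1) * (z ^ k / k.factorial) =
      (1 - t)⁻¹ * ((z * t / (1 - t)) ^ k / k.factorial) := by
    rw [div_pow, mul_pow, pow_succ]
    field_simp
  simpa only [hvalue] using (hasSum_choose_mul_pow k ht).mul_right (z ^ k / k.factorial)

theorem summable_choose_mul_pow_mul_pow_div_factorial {t : ℝ} (ht0 : 0 ≤ t) (ht : t < 1)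
    {z : ℝ} (hz : 0 ≤ z) :
    Summable (fun p : ℕ × ℕ => (p.1.choose p.2 : ℝ) * t ^ p.1 * (z ^ p.2 / p.2.factorial)) := by
  have hcol k := hasSum_choose_mul_pow_mul_pow_div_factorial_fst k
    (by rwa [Real.norm_of_nonneg ht0] : ‖t‖ < 1) z
  rw [← (Equiv.prodComm ℕ ℕ).summable_iff]
  refine (summable_prod_of_nonneg fun p => by dsimp; positivity).mpr
    ⟨fun k => (hcol k).summable, ?_⟩
  simp only [Function.comp_apply, Equiv.prodComm_apply, Prod.swap_prod_mk, (hcol _).tsum_eq]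
  exact (Real.summable_pow_div_factorial _).mul_left _

theorem hasSum_choose_mul_pow_mul_pow_div_factorial {𝕜 : Type*} [RCLike 𝕜] {t : 𝕜}
    (ht : ‖t‖ < 1) (z : 𝕜) :
    HasSum (fun p : ℕ × ℕ => (p.1.choose p.2 : 𝕜) * t ^ p.1 * (z ^ p.2 / p.2.factorial))
      ((1 - t)⁻¹ * NormedSpace.exp (z * t / (1 - t))) := by
  have hsum : Summable (fun p : ℕ × ℕ => (p.1.choose p.2 : 𝕜) * t ^ p.1 *
      (z ^ p.2 / p.2.factorial)) := by
    refine Summable.of_norm ?_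
    convert summable_choose_mul_pow_mul_pow_div_factorial (norm_nonneg t) ht (norm_nonneg z)
      using 2 with p
    simp [norm_pow]
  have hswap := (Equiv.prodComm ℕ ℕ).hasSum_iff.mpr hsum.hasSum
  have hexp := (NormedSpace.expSeries_div_hasSum_exp (z * t / (1 - t))).mul_left (1 - t)⁻¹
  rw [← (hswap.prod_fiberwise (hasSum_choose_mul_pow_mul_pow_div_factorial_fst · ht z)).unique
    hexp]
  exact hsum.hasSum

theorem integrableOn_exp_neg_mul_pow (m : ℕ) :
    IntegrableOn (fun y : ℝ => exp (-y) * y ^ m) (Ioi 0) := by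
  simpa [← Real.rpow_natCast] using Real.GammaIntegral_convergent (s := m + 1) (by positivity)

theorem integral_exp_neg_mul_pow (m : ℕ) :
    ∫ y in Ioi (0 : ℝ), exp (-y) * y ^ m = m.factorial := by
  simpa [← Real.rpow_natCast, Real.Gamma_nat_eq_factorial] using
    (Real.Gamma_eq_integral (s := m + 1) (by positivity)).symm

theorem lagL_eq_sum (n : ℕ) (x : ℝ) :
    lagL n x = ∑ k ∈ Finset.range (n + 1), (n.choose k : ℝ) * (-x) ^ k / k.factorial := by
  refine Finset.sum_congr rfl fun k hk => ?_
  rw [Nat.choose_symm (Nat.lt_succ_iff.mp (Finset.mem_range.mp hk))]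

theorem exp_neg_mul_lagL_mul_pow (n m : ℕ) (y : ℝ) :
    exp (-y) * lagL n y * y ^ m = ∑ k ∈ Finset.range (n + 1),
      (-1) ^ k * n.choose k / k.factorial * (exp (-y) * y ^ (k + m)) := by
  rw [lagL_eq_sum, Finset.mul_sum, Finset.sum_mul]
  refine Finset.sum_congr rfl fun k _ => ?_
  rw [neg_pow, pow_add]
  ring

theorem integrableOn_exp_neg_mul_lagL_mul_pow (n m : ℕ) :
    IntegrableOn (fun y => exp (-y) * lagL n y * y ^ m) (Ioi 0) := by
  simp_rw [exp_neg_mul_lagL_mul_pow]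
  exact integrable_finsetSum _ fun k _ => (integrableOn_exp_neg_mul_pow _).const_mul _

theorem integral_exp_neg_mul_lagL_mul_pow (n m : ℕ) :
    ∫ y in Ioi (0 : ℝ), exp (-y) * lagL n y * y ^ m = (-1) ^ n * m.factorial * m.choose n := by
  simp_rw [exp_neg_mul_lagL_mul_pow]
  rw [integral_finsetSum _ fun k _ => (integrableOn_exp_neg_mul_pow _).const_mul _]
  simp_rw [integral_const_mul, integral_exp_neg_mul_pow]
  have key := congrArg (fun z : ℤ => ((-1) ^ n * m.factorial * z : ℝ))
    (Int.alternating_sum_range_choose_mul_add_choose n m)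
  simp only [Int.cast_sum, Int.cast_mul, Int.cast_pow, Int.cast_neg, Int.cast_one,
    Int.cast_natCast, Finset.mul_sum] at key
  rw [← key]
  refine Finset.sum_congr rfl fun k hk => ?_
  have hkn : k ≤ n := Nat.lt_succ_iff.mp (Finset.mem_range.mp hk)
  have hsign : (-1 : ℝ) ^ k = (-1) ^ n * (-1) ^ (n - k) := by
    obtain ⟨j, rfl⟩ := Nat.exists_eq_add_of_le hkn
    rw [Nat.add_sub_cancel_left, pow_add, mul_assoc, ← mul_pow, neg_one_mul, neg_neg, one_pow,
      mul_one]
  have hfac : ((k + m).factorial : ℝ) = (k + m).choose k * k.factorial * m.factorial := by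
    rw [Nat.choose_symm_add]
    exact_mod_cast (Nat.add_choose_mul_factorial_mul_factorial k m).symm
  rw [hsign, hfac]
  field_simp

theorem exp_neg_mul_lagL_sq (n : ℕ) (y : ℝ) :
    exp (-y) * lagL n y ^ 2 = ∑ m ∈ Finset.range (n + 1),
      (n.choose m : ℝ) * (-1) ^ m / m.factorial * (exp (-y) * lagL n y * y ^ m) := by
  rw [sq, ← mul_assoc]
  nth_rw 2 [lagL_eq_sum n y]
  rw [Finset.mul_sum]
  refine Finset.sum_congr rfl fun m _ => ?_
  rw [neg_pow]
  ring

theorem integrableOn_exp_neg_mul_lagL_sq (n : ℕ) :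
    IntegrableOn (fun y => exp (-y) * lagL n y ^ 2) (Ioi 0) := by
  simp_rw [exp_neg_mul_lagL_sq]
  exact integrable_finsetSum _ fun m _ => (integrableOn_exp_neg_mul_lagL_mul_pow n m).const_mul _

theorem integral_exp_neg_mul_lagL_sq (n : ℕ) :
    ∫ y in Ioi (0 : ℝ), exp (-y) * lagL n y ^ 2 = 1 := by
  simp_rw [exp_neg_mul_lagL_sq]
  rw [integral_finsetSum _ fun m _ => (integrableOn_exp_neg_mul_lagL_mul_pow n m).const_mul _]
  simp_rw [integral_const_mul, integral_exp_neg_mul_lagL_mul_pow]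
  rw [Finset.sum_eq_single_of_mem n (Finset.self_mem_range_succ n)]
  · field_simp
    simp [← pow_mul]
  · intro m hm hmn
    rw [Nat.choose_eq_zero_of_lt (lt_of_le_of_ne (Nat.lt_succ_iff.mp (Finset.mem_range.mp hm)) hmn)]
    simp

theorem lagPhi_sq (n : ℕ) (x : ℝ) : lagPhi n x ^ 2 = exp (-(2 * x)) * lagL n (2 * x) ^ 2 := by
  rw [lagPhi, mul_pow, ← Real.exp_nat_mul]
  ring_nf

theorem integrableOn_lagPhi_sq (n : ℕ) : IntegrableOn (fun x => lagPhi n x ^ 2) (Ioi 0) := by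
  simp_rw [lagPhi_sq]
  refine (integrableOn_Ioi_comp_mul_left_iff (fun y => exp (-y) * lagL n y ^ 2) 0 two_pos).mpr ?_
  simpa using integrableOn_exp_neg_mul_lagL_sq n

theorem integral_lagPhi_sq (n : ℕ) : ∫ x in Ioi (0 : ℝ), lagPhi n x ^ 2 = 1 / 2 := by
  simp_rw [lagPhi_sq]
  rw [integral_comp_mul_left_Ioi (fun y => exp (-y) * lagL n y ^ 2) 0 two_pos, mul_zero,
    integral_exp_neg_mul_lagL_sq, smul_eq_mul, mul_one, one_div]

theorem eLpNorm_lagPhi (n : ℕ) :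
    eLpNorm (lagPhi n) 2 (volume.restrict (Ioi 0)) = ENNReal.ofReal (√2)⁻¹ := by
  have hmeas : AEStronglyMeasurable (lagPhi n) (volume.restrict (Ioi 0)) := by
    unfold lagPhi lagL
    fun_prop
  have hmem : MemLp (lagPhi n) 2 (volume.restrict (Ioi 0)) :=
    (memLp_two_iff_integrable_sq hmeas).mpr (integrableOn_lagPhi_sq n)
  rw [hmem.eLpNorm_eq_integral_rpow_norm two_ne_zero ENNReal.ofNat_ne_top]
  simp_rw [ENNReal.toReal_ofNat, Real.rpow_two, Real.norm_eq_abs, sq_abs, integral_lagPhi_sq,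
    Real.sqrt_eq_rpow, one_div, Real.inv_rpow zero_le_two]

theorem hasSum_pow_mul_lagL {𝕜 : Type*} [RCLike 𝕜] {t : 𝕜} (ht : ‖t‖ < 1) (x : ℝ) :
    HasSum (fun n => t ^ n * (lagL n x : 𝕜)) ((1 - t)⁻¹ * NormedSpace.exp (-x * t / (1 - t))) := by
  have hrow : ∀ n : ℕ, HasSum (fun k => (n.choose k : 𝕜) * t ^ n * ((-x : 𝕜) ^ k / k.factorial))
      (t ^ n * (lagL n x : 𝕜)) := by
    intro n
    have hsupp : ∀ k ∉ Finset.range (n + 1),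
        (n.choose k : 𝕜) * t ^ n * ((-x : 𝕜) ^ k / k.factorial) = 0 := fun k hk => by
      rw [Nat.choose_eq_zero_of_lt (by simpa using hk), Nat.cast_zero, zero_mul, zero_mul]
    have hrow_sum : t ^ n * (lagL n x : 𝕜) = ∑ k ∈ Finset.range (n + 1),
        (n.choose k : 𝕜) * t ^ n * ((-x : 𝕜) ^ k / k.factorial) := by
      rw [lagL_eq_sum]
      push_cast
      rw [Finset.mul_sum]
      refine Finset.sum_congr rfl fun k _ => ?_
      ring
    rw [hrow_sum]
    exact hasSum_sum_of_ne_finset_zero hsupp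
  exact (hasSum_choose_mul_pow_mul_pow_div_factorial ht (-x)).prod_fiberwise hrow

theorem norm_sub_one_div_add_one_lt_one {b : ℂ} (hb : 0 < b.re) : ‖(b - 1) / (b + 1)‖ < 1 := by
  have hlt : ‖b - 1‖ < ‖b + 1‖ := by
    rw [← sq_lt_sq₀ (norm_nonneg _) (norm_nonneg _), Complex.sq_norm, Complex.sq_norm,
      Complex.normSq_apply, Complex.normSq_apply]
    simp only [Complex.sub_re, Complex.add_re, Complex.sub_im, Complex.add_im, Complex.one_re,
      Complex.one_im]
    nlinarith
  rw [norm_div]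
  exact (div_lt_one ((norm_nonneg _).trans_lt hlt)).mpr hlt

theorem hasSum_lagPhi {b : ℂ} (hb : 0 < b.re) (ξ : ℝ) :
    HasSum (fun n : ℕ => 2 / (b + 1) * ((b - 1) / (b + 1)) ^ n * (lagPhi n ξ : ℂ))
      (Complex.exp (-b * ξ)) := by
  have hb1 : b + 1 ≠ 0 := fun h => by simp [eq_neg_of_add_eq_zero_left h] at hb; linarith
  set c := (b - 1) / (b + 1)
  have h := (hasSum_pow_mul_lagL (norm_sub_one_div_add_one_lt_one hb) (2 * ξ)).mul_left
    (2 / (b + 1) * Complex.exp (-ξ))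
  have hterm : ∀ n : ℕ, 2 / (b + 1) * c ^ n * (lagPhi n ξ : ℂ) =
      2 / (b + 1) * Complex.exp (-ξ) * (c ^ n * (lagL n (2 * ξ) : ℂ)) := fun n => by
    simp only [lagPhi, Complex.ofReal_mul, Complex.ofReal_exp, Complex.ofReal_neg]
    ring
  have hc : 1 - c = 2 / (b + 1) := by
    simp only [c]
    field_simp
    ring
  have hval : 2 / (b + 1) * Complex.exp (-ξ) *
      ((1 - c)⁻¹ * NormedSpace.exp (-((2 * ξ : ℝ) : ℂ) * c / (1 - c))) = Complex.exp (-b * ξ) := by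
    have hexp : -((2 * ξ : ℝ) : ℂ) * c / (2 / (b + 1)) = -(b - 1) * ξ := by
      simp only [c]
      push_cast
      field_simp
    rw [← Complex.exp_eq_exp_ℂ, hc, hexp, mul_mul_mul_comm, mul_inv_cancel₀ (by simpa using hb1),
      one_mul, ← Complex.exp_add]
    ring_nf
  simp_rw [hterm, ← hval]
  exact h

theorem tsum_eLpNorm_mul_pow_mul_lagPhi_ne_top (a : ℂ) {c : ℂ} (hc : ‖c‖ < 1) :
    ∑' n, eLpNorm (fun ξ : ℝ => a * c ^ n * (lagPhi n ξ : ℂ)) 2 (volume.restrict (Ioi 0)) ≠ ∞ := by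
  have hterm : ∀ n, eLpNorm (fun ξ : ℝ => a * c ^ n * (lagPhi n ξ : ℂ)) 2
      (volume.restrict (Ioi 0)) = ‖a‖ₑ * ENNReal.ofReal (√2)⁻¹ * ‖c‖ₑ ^ n := by
    intro n
    have hreal : eLpNorm (fun ξ : ℝ => (lagPhi n ξ : ℂ)) 2 (volume.restrict (Ioi 0)) =
        eLpNorm (lagPhi n) 2 (volume.restrict (Ioi 0)) :=
      eLpNorm_congr_enorm_ae (ae_of_all _ fun ξ => by simp [enorm_eq_nnnorm])
    rw [← eLpNorm_lagPhi n, ← hreal, ← enorm_pow, mul_right_comm, ← enorm_mul,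
      ← eLpNorm_const_smul]
    rfl
  have hc' : ‖c‖ₑ < 1 := by
    rw [← ofReal_norm]
    exact ENNReal.ofReal_lt_one.mpr hc
  simp_rw [hterm, ENNReal.tsum_mul_left, ENNReal.tsum_geometric]
  exact ENNReal.mul_ne_top (ENNReal.mul_ne_top enorm_ne_top ENNReal.ofReal_ne_top)
    (ENNReal.inv_ne_top.mpr (tsub_pos_of_lt hc').ne')

theorem exp_laguerre_expansion (b : ℂ) (hb : 0 < b.re) :
    (∀ ξ : ℝ, 0 ≤ ξ →
      HasSum (fun n : ℕ => 2 / (b + 1) * ((b - 1) / (b + 1)) ^ n * (lagPhi n ξ : ℂ))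
        (Complex.exp (-b * ξ))) ∧
    Filter.Tendsto (fun N : ℕ =>
        eLpNorm (fun ξ : ℝ => Complex.exp (-b * ξ)
          - ∑ n ∈ Finset.range (N + 1),
              2 / (b + 1) * ((b - 1) / (b + 1)) ^ n * (lagPhi n ξ : ℂ)) 2
          (volume.restrict (Ioi (0:ℝ))))
      Filter.atTop (nhds 0) := by
  refine ⟨fun ξ _ => hasSum_lagPhi hb ξ, ?_⟩
  have hmeas : ∀ n, AEStronglyMeasurable
      (fun ξ : ℝ => 2 / (b + 1) * ((b - 1) / (b + 1)) ^ n * (lagPhi n ξ : ℂ))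
      (volume.restrict (Ioi 0)) := fun n => by
    unfold lagPhi lagL
    fun_prop
  have h := tendsto_eLpNorm_sub_sum_range_of_hasSum one_le_two hmeas
    (Eventually.of_forall (hasSum_lagPhi hb))
    (tsum_eLpNorm_mul_pow_mul_lagPhi_ne_top _ (norm_sub_one_div_add_one_lt_one hb))
  refine (h.comp (tendsto_add_atTop_nat 1)).congr fun N => ?_
  simp only [Function.comp_apply, Finset.sum_fn]
  rfl
end

section
/- For every a ∈ ℂ \ ℝ_{≤0} and all n, k ∈ ℕ with n ≥ k, β_{n,k}(a) = α_{n,1}(a) · L_k(−2a). -/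
open MeasureTheory Set
open scoped ENNReal

/-- `α_{n,k}(a) = ∫₀^∞ e^{-ξ} (a+ξ)^{-k} φ_n(ξ) dξ`. -/
noncomputable def lagAlpha (n k : ℕ) (a : ℂ) : ℂ :=
  ∫ ξ in Ioi (0:ℝ), Complex.exp (-(ξ:ℂ)) / (a + (ξ:ℂ)) ^ k * (lagPhi n ξ : ℂ)

/-- The Laguerre polynomial `L_n` over `ℂ`. -/
noncomputable def lagLc (n : ℕ) (x : ℂ) : ℂ :=
  ∑ k ∈ Finset.range (n + 1), (n.choose (n - k) : ℂ) * (-x) ^ k / (Nat.factorial k : ℂ)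

/-- `β_{n,k}(a) = ∫₀^∞ φ_n(x) φ_k(x) / (a + x) dx`. -/
noncomputable def lagBeta (n k : ℕ) (a : ℂ) : ℂ :=
  ∫ x in Ioi (0:ℝ), (lagPhi n x : ℂ) * (lagPhi k x : ℂ) / (a + (x:ℂ))

/-!
Write `L_k(2x) = (x + a) q(x) + L_k(-2a)` with `deg q < k ≤ n`. As `φ_k(x) = e^{-x} L_k(2x)`, the
integrand of `β_{n,k}(a)` splits into `e^{-x} φ_n(x) L_k(-2a) / (a + x)`, whose integral is
`α_{n,1}(a) L_k(-2a)`, and `φ_n(x) q(x) e^{-x}`, whose integral vanishes because `φ_n` is orthogonal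
to all polynomials of degree `< n` for the weight `e^{-x}`. That orthogonality follows from
`∫₀^∞ x^m e^{-2x} dx = m! / 2^{m+1}`, which turns `∫₀^∞ φ_n(x) x^j e^{-x} dx` into an `n`-th finite
difference of a polynomial of degree `j < n`.
-/

open Polynomial

theorem Polynomial.alternating_sum_choose_mul_eval_eq_zero {R : Type*} [CommRing R]
    {P : R[X]} {n : ℕ} (hP : P.natDegree < n) :
    ∑ i ∈ Finset.range (n + 1), (-1) ^ i * (n.choose i : R) * P.eval (i : R) = 0 := by
  have h := congrFun (fwdDiff_iter_eq_zero_of_degree_lt hP) 0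
  rw [fwdDiff_iter_eq_sum_shift, Pi.zero_apply] at h
  calc ∑ i ∈ Finset.range (n + 1), (-1) ^ i * (n.choose i : R) * P.eval (i : R)
      = (-1) ^ n * ∑ i ∈ Finset.range (n + 1),
          ((-1 : ℤ) ^ (n - i) * n.choose i) • P.eval (0 + i • (1 : R)) := by
        rw [Finset.mul_sum]
        refine Finset.sum_congr rfl fun i hi => ?_
        obtain ⟨d, rfl⟩ := Nat.exists_eq_add_of_le (Nat.lt_succ_iff.mp (Finset.mem_range.mp hi))
        rw [zsmul_eq_mul, nsmul_one, zero_add, Nat.add_sub_cancel_left]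
        push_cast
        have hd : ((-1 : R) ^ d) ^ 2 = 1 := by
          rw [← pow_mul, mul_comm, pow_mul, neg_one_sq, one_pow]
        linear_combination -((-1) ^ i * ((i + d).choose i : R) * P.eval (i : R)) * hd
    _ = 0 := by rw [h, mul_zero]

theorem Polynomial.exists_eq_X_sub_C_mul_add_C_eval {R : Type*} [CommRing R] [IsDomain R]
    {P : R[X]} {k : ℕ} (hP : P.natDegree ≤ k) (w : R) :
    ∃ q : R[X], q.degree < k ∧ P = (X - C w) * q + C (P.eval w) := by
  obtain ⟨q, hq⟩ := X_sub_C_dvd_sub_C_eval (a := w) (p := P)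
  refine ⟨q, ?_, by rw [← hq, sub_add_cancel]⟩
  rcases eq_or_ne q 0 with rfl | hq0
  · exact WithBot.bot_lt_coe k
  have hdeg := congrArg natDegree hq
  rw [natDegree_sub_C, natDegree_mul (X_sub_C_ne_zero w) hq0, natDegree_X_sub_C] at hdeg
  exact (natDegree_lt_iff_degree_lt hq0).mp (by omega)

noncomputable def lagPoly (R : Type*) [Field R] (n : ℕ) : R[X] :=
  ∑ k ∈ Finset.range (n + 1), C ((n.choose (n - k) : R) / k.factorial) * (-X) ^ k

theorem eval_lagPoly (n : ℕ) (z : ℂ) : (lagPoly ℂ n).eval z = lagLc n z := by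
  simp only [lagPoly, lagLc, eval_finsetSum, eval_mul, eval_C, eval_pow, eval_neg, eval_X]
  refine Finset.sum_congr rfl fun k _ => ?_
  ring

theorem natDegree_lagPoly_le (R : Type*) [Field R] (n : ℕ) : (lagPoly R n).natDegree ≤ n := by
  refine natDegree_sum_le_of_forall_le _ _ fun k hk => ?_
  refine (natDegree_C_mul_le _ _).trans (natDegree_pow_le.trans ?_)
  rw [natDegree_neg, natDegree_X, mul_one]
  exact Nat.lt_succ_iff.mp (Finset.mem_range.mp hk)

theorem exists_lagLc_two_mul_eq (k : ℕ) (a : ℂ) :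
    ∃ q : ℂ[X], q.degree < k ∧ ∀ z, lagLc k (2 * z) = (z + a) * q.eval z + lagLc k (-2 * a) := by
  have hdeg : ((lagPoly ℂ k).comp (C 2 * X)).natDegree ≤ k := by
    rw [natDegree_comp, natDegree_C_mul_X _ two_ne_zero, mul_one]
    exact natDegree_lagPoly_le ℂ k
  obtain ⟨q, hq_deg, hq⟩ := exists_eq_X_sub_C_mul_add_C_eval hdeg (-a)
  refine ⟨q, hq_deg, fun z => ?_⟩
  have h := congrArg (eval z) hq
  simp only [eval_comp, eval_lagPoly, eval_add, eval_mul, eval_sub, eval_C, eval_X] at h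
  rw [h, sub_neg_eq_add, mul_neg, ← neg_mul]

theorem integrableOn_pow_mul_exp_neg_mul_Ioi (m : ℕ) {b : ℝ} (hb : 0 < b) :
    IntegrableOn (fun x : ℝ => x ^ m * Real.exp (-(b * x))) (Ioi 0) := by
  refine (integrableOn_rpow_mul_exp_neg_mul_rpow (s := m) (p := 1)
    (neg_one_lt_zero.trans_le m.cast_nonneg) one_pos hb).congr_fun (fun x _ => ?_)
    measurableSet_Ioi
  simp only [Real.rpow_one, Real.rpow_natCast, neg_mul]

theorem integral_pow_mul_exp_neg_mul_Ioi (m : ℕ) {b : ℝ} (hb : 0 < b) :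
    ∫ x in Ioi (0 : ℝ), x ^ m * Real.exp (-(b * x)) = m.factorial / b ^ (m + 1) := by
  have h := Real.integral_rpow_mul_exp_neg_mul_Ioi (a := m + 1) (by positivity) hb
  simp only [add_sub_cancel_right, Real.rpow_natCast] at h
  rw [h, Real.Gamma_nat_eq_factorial, ← Nat.cast_succ, Real.rpow_natCast, one_div, inv_pow,
    inv_mul_eq_div]

theorem lagPhi_mul_pow_mul_exp_neg (n j : ℕ) (x : ℝ) :
    lagPhi n x * x ^ j * Real.exp (-x) = ∑ i ∈ Finset.range (n + 1),
      (n.choose (n - i) : ℝ) * (-2) ^ i / i.factorial * (x ^ (i + j) * Real.exp (-(2 * x))) := by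
  have hexp : Real.exp (-x) * Real.exp (-x) = Real.exp (-(2 * x)) := by
    rw [← Real.exp_add]; ring_nf
  rw [lagPhi, lagL, Finset.mul_sum, Finset.sum_mul, Finset.sum_mul]
  refine Finset.sum_congr rfl fun i _ => ?_
  rw [← hexp, neg_mul_eq_neg_mul, mul_pow, pow_add]
  ring

theorem integrableOn_lagPhi_mul_pow_mul_exp_neg (n j : ℕ) :
    IntegrableOn (fun x => lagPhi n x * x ^ j * Real.exp (-x)) (Ioi 0) := by
  simp_rw [lagPhi_mul_pow_mul_exp_neg]
  exact integrable_finsetSum _ fun i _ =>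
    (integrableOn_pow_mul_exp_neg_mul_Ioi (i + j) two_pos).const_mul _

theorem integral_lagPhi_mul_pow_mul_exp_neg {n j : ℕ} (hj : j < n) :
    ∫ x in Ioi (0 : ℝ), lagPhi n x * x ^ j * Real.exp (-x) = 0 := by
  simp_rw [lagPhi_mul_pow_mul_exp_neg]
  rw [integral_finsetSum _ fun i _ =>
    (integrableOn_pow_mul_exp_neg_mul_Ioi (i + j) two_pos).const_mul _]
  simp_rw [integral_const_mul, integral_pow_mul_exp_neg_mul_Ioi _ two_pos]
  -- `(i + j)! / i!` is the value at `i` of the degree-`j` polynomial `(i + 1) ⋯ (i + j)`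
  set P : ℝ[X] := (ascPochhammer ℝ j).comp (X + C 1)
  have hP : P.natDegree < n := by
    rwa [natDegree_comp, ascPochhammer_natDegree, natDegree_X_add_C, mul_one]
  calc ∑ i ∈ Finset.range (n + 1), (n.choose (n - i) : ℝ) * (-2) ^ i / i.factorial *
        ((i + j).factorial / 2 ^ (i + j + 1))
      = ∑ i ∈ Finset.range (n + 1),
          (-1) ^ i * (n.choose i : ℝ) * P.eval (i : ℝ) / 2 ^ (j + 1) := by
        refine Finset.sum_congr rfl fun i hi => ?_
        rw [Nat.choose_symm (Nat.lt_succ_iff.mp (Finset.mem_range.mp hi)),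
          ← factorial_mul_ascPochhammer, eval_comp]
        simp only [eval_add, eval_X, eval_C, neg_pow (2 : ℝ)]
        field_simp
        ring
    _ = 0 := by rw [← Finset.sum_div, alternating_sum_choose_mul_eval_eq_zero hP, zero_div]

theorem lagPhi_mul_cexp_neg_mul_eval_eq_sum (n : ℕ) {q : ℂ[X]} {m : ℕ} (hq : q.natDegree < m)
    (x : ℝ) :
    (lagPhi n x : ℂ) * Complex.exp (-x) * q.eval (x : ℂ) =
      ∑ j ∈ Finset.range m, q.coeff j * ((lagPhi n x * x ^ j * Real.exp (-x) : ℝ) : ℂ) := by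
  rw [eval_eq_sum_range' hq, Finset.mul_sum]
  refine Finset.sum_congr rfl fun j _ => ?_
  push_cast
  ring

theorem integrableOn_lagPhi_mul_cexp_neg_mul_eval (n : ℕ) (q : ℂ[X]) :
    IntegrableOn (fun x : ℝ => (lagPhi n x : ℂ) * Complex.exp (-x) * q.eval (x : ℂ)) (Ioi 0) := by
  simp_rw [lagPhi_mul_cexp_neg_mul_eval_eq_sum n q.natDegree.lt_succ_self]
  exact integrable_finsetSum _ fun j _ =>
    (integrableOn_lagPhi_mul_pow_mul_exp_neg n j).ofReal.const_mul _

theorem integral_lagPhi_mul_cexp_neg_mul_eval {n : ℕ} {q : ℂ[X]} (hq : q.degree < n) :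
    ∫ x in Ioi (0 : ℝ), (lagPhi n x : ℂ) * Complex.exp (-x) * q.eval (x : ℂ) = 0 := by
  rcases eq_or_ne q 0 with rfl | hq0
  · simp
  simp_rw [lagPhi_mul_cexp_neg_mul_eval_eq_sum n ((natDegree_lt_iff_degree_lt hq0).mpr hq)]
  rw [integral_finsetSum _ fun j _ =>
    (integrableOn_lagPhi_mul_pow_mul_exp_neg n j).ofReal.const_mul _]
  refine Finset.sum_eq_zero fun j hj => ?_
  rw [integral_const_mul, integral_complex_ofReal,
    integral_lagPhi_mul_pow_mul_exp_neg (Finset.mem_range.mp hj), Complex.ofReal_zero, mul_zero]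

theorem Complex.mem_slitPlane_of_forall_ne_ofReal {z : ℂ} (hz : ∀ x : ℝ, x ≤ 0 → z ≠ x) :
    z ∈ slitPlane := by
  refine mem_slitPlane_iff_not_le_zero.mpr fun h => hz z.re (nonpos_iff.mp h).1 ?_
  exact ext rfl (by simp [(nonpos_iff.mp h).2])

theorem Complex.add_ofReal_mem_slitPlane {z : ℂ} (hz : z ∈ slitPlane) {x : ℝ} (hx : 0 ≤ x) :
    z + x ∈ slitPlane := by
  rw [mem_slitPlane_iff] at hz ⊢
  simpa using hz.imp (fun h => by linarith) id

theorem Complex.exists_pos_le_norm_add_ofReal {z : ℂ} (hz : z ∈ slitPlane) :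
    ∃ ε > 0, ∀ x : ℝ, 0 ≤ x → ε ≤ ‖z + x‖ := by
  rcases mem_slitPlane_iff.mp hz with hre | him
  · refine ⟨z.re, hre, fun x hx => ?_⟩
    calc z.re ≤ (z + x).re := by simpa using hx
      _ ≤ ‖z + x‖ := re_le_norm _
  · refine ⟨|z.im|, abs_pos.mpr him, fun x _ => ?_⟩
    calc |z.im| = |(z + x).im| := by simp
      _ ≤ ‖z + x‖ := abs_im_le_norm _

theorem MeasureTheory.IntegrableOn.div_add_ofReal {f : ℝ → ℂ} (hf : IntegrableOn f (Ioi 0))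
    {z : ℂ} (hz : z ∈ Complex.slitPlane) :
    IntegrableOn (fun x : ℝ => f x / (z + x)) (Ioi 0) := by
  obtain ⟨ε, hε, hbound⟩ := Complex.exists_pos_le_norm_add_ofReal hz
  have hinv : ∀ᵐ x : ℝ ∂volume.restrict (Ioi (0 : ℝ)), ‖(z + x)⁻¹‖ ≤ ε⁻¹ := by
    filter_upwards [self_mem_ae_restrict measurableSet_Ioi] with x hx
    rw [norm_inv]
    exact inv_anti₀ hε (hbound x (le_of_lt hx))
  simp_rw [div_eq_inv_mul]
  exact hf.bdd_mul (Complex.measurable_ofReal.const_add z).inv.aestronglyMeasurable hinv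

theorem ofReal_lagPhi (n : ℕ) (x : ℝ) :
    (lagPhi n x : ℂ) = Complex.exp (-x) * lagLc n (2 * x) := by
  simp only [lagPhi, lagL, lagLc]
  push_cast
  rfl

theorem lagPhi_mul_lagPhi_div_add_eq {a : ℂ} {k : ℕ} {q : ℂ[X]}
    (hq : ∀ z, lagLc k (2 * z) = (z + a) * q.eval z + lagLc k (-2 * a)) (n : ℕ) {x : ℝ}
    (hax : a + x ≠ 0) :
    (lagPhi n x : ℂ) * (lagPhi k x : ℂ) / (a + x) =
      Complex.exp (-(x : ℂ)) / (a + x) ^ 1 * (lagPhi n x : ℂ) * lagLc k (-2 * a) +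
        (lagPhi n x : ℂ) * Complex.exp (-x) * q.eval (x : ℂ) := by
  rw [ofReal_lagPhi k, hq]
  field_simp
  ring

theorem lagBeta_eq_lagAlpha_mul (a : ℂ) (ha : ∀ x : ℝ, x ≤ 0 → a ≠ (x : ℂ))
    (n k : ℕ) (hkn : k ≤ n) :
    lagBeta n k a = lagAlpha n 1 a * lagLc k (-2 * a) := by
  have hslit : a ∈ Complex.slitPlane := Complex.mem_slitPlane_of_forall_ne_ofReal ha
  obtain ⟨q, hq_deg, hq⟩ := exists_lagLc_two_mul_eq k a
  have hsplit (x : ℝ) (hx : x ∈ Ioi 0) := lagPhi_mul_lagPhi_div_add_eq hq n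
    (Complex.slitPlane_ne_zero (Complex.add_ofReal_mem_slitPlane hslit (le_of_lt hx)))
  have hα : IntegrableOn (fun x : ℝ =>
      Complex.exp (-(x : ℂ)) / (a + x) ^ 1 * (lagPhi n x : ℂ) * lagLc k (-2 * a)) (Ioi 0) := by
    refine IntegrableOn.congr_fun ((IntegrableOn.div_add_ofReal
      (integrableOn_lagPhi_mul_cexp_neg_mul_eval n 1) hslit).mul_const (lagLc k (-2 * a)))
      (fun x _ => ?_) measurableSet_Ioi
    simp only [eval_one]
    ring
  rw [lagBeta, lagAlpha, ← integral_mul_const, setIntegral_congr_fun measurableSet_Ioi hsplit,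
    integral_add hα (integrableOn_lagPhi_mul_cexp_neg_mul_eval n q),
    integral_lagPhi_mul_cexp_neg_mul_eval (hq_deg.trans_le (by exact_mod_cast hkn)), add_zero]
end
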